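/- Let $A \in \mathbb{R}^{n \times n}$, $B \in \mathbb{R}^{n \times m}$, $C \in \mathbb{R}^{m \times n}$, $D \in \mathbb{R}^{m \times m}$. There exists a symmetric positive definite $X$ with $\begin{pmatrix} A^\top X + XA & XB & C^\top \\ B^\top X & -I_m & D^\top \\ C & D & -I_m \end{pmatrix} \preceq 0$ if and only if there exist $J, R, Q \in \mathbb{R}^{n \times n}$ and $F, P \in \mathbb{R}^{n \times m}$ with $J^\top = -J$, $Q$ symmetric positive definite, $A = (J-R)Q$, $B = F-P$, $C = (F+P)^\top Q$, and $\begin{pmatrix} 2R & -(F-P) & -(F+P) \\ -(F-P)^\top & I_m & -D^\top \\ -(F+P)^\top & -D & I_m \end{pmatrix} \succeq 0$. -/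

import Mathlib

open Matrix

/-- 3x3 block matrix with block sizes n, m, m. -/
def blk3 (n m : ℕ) (M11 : Matrix (Fin n) (Fin n) ℝ) (M12 M13 : Matrix (Fin n) (Fin m) ℝ)
    (M21 M31 : Matrix (Fin m) (Fin n) ℝ) (M22 M23 M32 M33 : Matrix (Fin m) (Fin m) ℝ) :
    Matrix (Fin n ⊕ (Fin m ⊕ Fin m)) (Fin n ⊕ (Fin m ⊕ Fin m)) ℝ :=
  Matrix.fromBlocks M11 (Matrix.fromCols M12 M13) (Matrix.fromRows M21 M31)
    (Matrix.fromBlocks M22 M23 M32 M33)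

/-- The scattering pH matrix K_s. -/
def Ksmat (n m : ℕ) (R : Matrix (Fin n) (Fin n) ℝ) (F P : Matrix (Fin n) (Fin m) ℝ)
    (D : Matrix (Fin m) (Fin m) ℝ) :
    Matrix (Fin n ⊕ (Fin m ⊕ Fin m)) (Fin n ⊕ (Fin m ⊕ Fin m)) ℝ :=
  blk3 n m ((2 : ℝ) • R) (-(F - P)) (-(F + P)) (-(F - P)ᵀ) (-(F + P)ᵀ) 1 (-Dᵀ) (-D) 1

/-- The bounded-real LMI matrix. -/
def BRmat (n m : ℕ) (A : Matrix (Fin n) (Fin n) ℝ) (B : Matrix (Fin n) (Fin m) ℝ)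
    (C : Matrix (Fin m) (Fin n) ℝ) (D : Matrix (Fin m) (Fin m) ℝ)
    (X : Matrix (Fin n) (Fin n) ℝ) :
    Matrix (Fin n ⊕ (Fin m ⊕ Fin m)) (Fin n ⊕ (Fin m ⊕ Fin m)) ℝ :=
  blk3 n m (Aᵀ * X + X * A) (X * B) Cᵀ (Bᵀ * X) C (-1) Dᵀ D (-1)

/-!
Both directions rest on one congruence. If `A = (J - R) Q`, `B = F - P`, `C = (F + P)ᵀ Q` with `J`
skew and `R`, `Q` symmetric, then the negated bounded-real matrix at `X = Q` equals `T K_s T` for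
`T = diag(Q, I, I)`, and congruence by the invertible `T` preserves positive semidefiniteness.
Conversely every system factors this way through a given symmetric invertible `X`: take `J` and `-R`
to be the skew and symmetric parts of `A X⁻¹`, and `F, P = (± B + X⁻¹ Cᵀ) / 2`. The symmetry of `R`
needed in the backward direction comes from `K_s` being Hermitian.
-/

lemma posSemidef_fromBlocks_one_conj_iff {ι κ 𝕜 : Type*} [Fintype ι] [Fintype κ]
    [DecidableEq ι] [DecidableEq κ] [CommRing 𝕜] [PartialOrder 𝕜] [StarRing 𝕜]
    {S : Matrix ι ι 𝕜} (hS : S.IsHermitian) (hSu : IsUnit S) {K : Matrix (ι ⊕ κ) (ι ⊕ κ) 𝕜} :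
    (fromBlocks S 0 0 1 * K * fromBlocks S 0 0 1).PosSemidef ↔ K.PosSemidef := by
  have hT : (fromBlocks S 0 0 (1 : Matrix κ κ 𝕜)).IsHermitian :=
    hS.fromBlocks conjTranspose_zero isHermitian_one
  have hTu : IsUnit (fromBlocks S 0 0 (1 : Matrix κ κ 𝕜)) :=
    isUnit_fromBlocks_zero₂₁.mpr ⟨hSu, isUnit_one⟩
  simpa only [star_eq_conjTranspose, hT.eq] using hTu.posSemidef_star_right_conjugate_iff (x := K)

section BlockMatrices

variable {n m : ℕ}

lemma fromBlocks_one_mul_blk3_mul (S M11 : Matrix (Fin n) (Fin n) ℝ)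
    (M12 M13 : Matrix (Fin n) (Fin m) ℝ) (M21 M31 : Matrix (Fin m) (Fin n) ℝ)
    (M22 M23 M32 M33 : Matrix (Fin m) (Fin m) ℝ) :
    fromBlocks S 0 0 1 * blk3 n m M11 M12 M13 M21 M31 M22 M23 M32 M33 * fromBlocks S 0 0 1 =
      blk3 n m (S * M11 * S) (S * M12) (S * M13) (M21 * S) (M31 * S) M22 M23 M32 M33 := by
  simp [blk3, fromBlocks_multiply, mul_fromCols, fromRows_mul]

lemma neg_blk3 (M11 : Matrix (Fin n) (Fin n) ℝ) (M12 M13 : Matrix (Fin n) (Fin m) ℝ)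
    (M21 M31 : Matrix (Fin m) (Fin n) ℝ) (M22 M23 M32 M33 : Matrix (Fin m) (Fin m) ℝ) :
    -blk3 n m M11 M12 M13 M21 M31 M22 M23 M32 M33 =
      blk3 n m (-M11) (-M12) (-M13) (-M21) (-M31) (-M22) (-M23) (-M32) (-M33) := by
  simp [blk3, fromBlocks_neg, fromCols_neg, fromRows_neg]

lemma isSymm_of_posSemidef_Ksmat {R : Matrix (Fin n) (Fin n) ℝ} {F P : Matrix (Fin n) (Fin m) ℝ}
    {D : Matrix (Fin m) (Fin m) ℝ} (hK : (Ksmat n m R F P D).PosSemidef) : R.IsSymm := by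
  have h2R : ((2 : ℝ) • R).IsSymm := by
    simpa using (isHermitian_fromBlocks_iff.mp hK.isHermitian).1
  simpa using h2R.smul (2⁻¹ : ℝ)

lemma neg_BRmat_eq_conj_Ksmat {J R Q : Matrix (Fin n) (Fin n) ℝ}
    {F P : Matrix (Fin n) (Fin m) ℝ} (D : Matrix (Fin m) (Fin m) ℝ)
    (hQ : Q.IsSymm) (hJ : Jᵀ = -J) (hR : R.IsSymm) :
    -BRmat n m ((J - R) * Q) (F - P) ((F + P)ᵀ * Q) D Q =
      fromBlocks Q 0 0 1 * Ksmat n m R F P D * fromBlocks Q 0 0 1 := by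
  rw [Ksmat, fromBlocks_one_mul_blk3_mul, BRmat, neg_blk3]
  simp only [transpose_mul, transpose_sub, transpose_transpose, hQ.eq, hR.eq, hJ]
  congr 1 <;>
    simp only [Matrix.mul_sub, Matrix.sub_mul, Matrix.mul_add, Matrix.add_mul, Matrix.mul_neg,
      Matrix.neg_mul, Matrix.mul_assoc, two_smul, transpose_add, neg_neg]
  abel

end BlockMatrices

lemma exists_sPH_factorization {n m : ℕ} {X : Matrix (Fin n) (Fin n) ℝ} (hX : X.IsSymm)
    (hXu : IsUnit X) (A : Matrix (Fin n) (Fin n) ℝ) (B : Matrix (Fin n) (Fin m) ℝ)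
    (C : Matrix (Fin m) (Fin n) ℝ) :
    ∃ (J R : Matrix (Fin n) (Fin n) ℝ) (F P : Matrix (Fin n) (Fin m) ℝ),
      Jᵀ = -J ∧ R.IsSymm ∧ (J - R) * X = A ∧ F - P = B ∧ (F + P)ᵀ * X = C := by
  have hXinv : X⁻¹ * X = 1 := nonsing_inv_mul X ((isUnit_iff_isUnit_det X).mp hXu)
  set M := A * X⁻¹
  set G := X⁻¹ * Cᵀ
  refine ⟨(2 : ℝ)⁻¹ • (M - Mᵀ), -(2 : ℝ)⁻¹ • (M + Mᵀ), (2 : ℝ)⁻¹ • (B + G),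
    (2 : ℝ)⁻¹ • (G - B), ?_, ?_, ?_, ?_, ?_⟩
  · rw [transpose_smul, transpose_sub, transpose_transpose]; module
  · rw [IsSymm, transpose_smul, transpose_add, transpose_transpose, add_comm]
  · have hJR : (2 : ℝ)⁻¹ • (M - Mᵀ) - -(2 : ℝ)⁻¹ • (M + Mᵀ) = M := by module
    rw [hJR, Matrix.mul_assoc, hXinv, Matrix.mul_one]
  · module
  · have hFP : (2 : ℝ)⁻¹ • (B + G) + (2 : ℝ)⁻¹ • (G - B) = G := by module
    rw [hFP, transpose_mul, transpose_nonsing_inv, hX.eq, transpose_transpose, Matrix.mul_assoc,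
      hXinv, Matrix.mul_one]

theorem stmt16 (n m : ℕ)
    (A : Matrix (Fin n) (Fin n) ℝ) (B : Matrix (Fin n) (Fin m) ℝ)
    (C : Matrix (Fin m) (Fin n) ℝ) (D : Matrix (Fin m) (Fin m) ℝ) :
    (∃ X : Matrix (Fin n) (Fin n) ℝ, X.PosDef ∧ (-(BRmat n m A B C D X)).PosSemidef) ↔
    (∃ (J R Q : Matrix (Fin n) (Fin n) ℝ) (F P : Matrix (Fin n) (Fin m) ℝ),
      Jᵀ = -J ∧ Q.PosDef ∧ (J - R) * Q = A ∧ F - P = B ∧ (F + P)ᵀ * Q = C ∧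
      (Ksmat n m R F P D).PosSemidef) := by
  constructor
  · rintro ⟨X, hX, hBR⟩
    have hXs : X.IsSymm := isHermitian_iff_isSymm.mp hX.isHermitian
    obtain ⟨J, R, F, P, hJ, hR, rfl, rfl, rfl⟩ := exists_sPH_factorization hXs hX.isUnit A B C
    rw [neg_BRmat_eq_conj_Ksmat D hXs hJ hR,
      posSemidef_fromBlocks_one_conj_iff hX.isHermitian hX.isUnit] at hBR
    exact ⟨J, R, X, F, P, hJ, hX, rfl, rfl, rfl, hBR⟩
  · rintro ⟨J, R, Q, F, P, hJ, hQ, rfl, rfl, rfl, hK⟩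
    refine ⟨Q, hQ, ?_⟩
    rw [neg_BRmat_eq_conj_Ksmat D (isHermitian_iff_isSymm.mp hQ.isHermitian) hJ
      (isSymm_of_posSemidef_Ksmat hK), posSemidef_fromBlocks_one_conj_iff hQ.isHermitian hQ.isUnit]
    exact hK
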